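/- Let w : ℝ → ℝ be three times differentiable and satisfy the Painlevé II equation w''(z) = 2·w(z)³ + z·w(z). Define u(x,t) = (3t)^{-1/3}·w(x·(3t)^{-1/3}) for t > 0. Then u satisfies the modified Korteweg–de Vries equation u_t - 6·u²·u_x + u_xxx = 0 on ℝ × (0,∞). -/

import Mathlib

/-! Write `p = (3t)^{-1/3}`, so `u = p · w(x p)` and `dp/dt = -p⁴`. Then
`u_x = p² w'(xp)`, `u_xxx = p⁴ w'''(xp)` and `u_t = -p⁴ (w + z w')(xp)` with `z = xp`,
so the mKdV expression is `p⁴ (w''' - 6 w² w' - w - z w')(xp)`, and this vanishes because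
it is the derivative of the Painlevé II equation `w'' = 2 w³ + z w`. -/

lemma painleveII_deriv {w w₁ w₂ w₃ : ℝ → ℝ}
    (h1 : ∀ z, HasDerivAt w (w₁ z) z) (h3 : ∀ z, HasDerivAt w₂ (w₃ z) z)
    (hPII : ∀ z, w₂ z = 2 * w z ^ 3 + z * w z) (z : ℝ) :
    w₃ z = 6 * w z ^ 2 * w₁ z + w z + z * w₁ z := by
  have hrhs : HasDerivAt w₂ (2 * ((3 : ℕ) * w z ^ (3 - 1) * w₁ z) + (1 * w z + z * w₁ z)) z := by
    rw [funext hPII]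
    exact (((h1 z).pow 3).const_mul 2).add ((hasDerivAt_id z).mul (h1 z))
  rw [(h3 z).unique hrhs]
  push_cast
  ring

lemma deriv_const_mul_comp_mul_const {f f' : ℝ → ℝ} (hf : ∀ z, HasDerivAt f (f' z) z)
    (c p : ℝ) : deriv (fun y => c * f (y * p)) = fun y => c * p * f' (y * p) := by
  funext y
  have hd : HasDerivAt (fun y => c * f (y * p)) (c * (f' (y * p) * p)) y :=
    ((hf (y * p)).comp y (hasDerivAt_mul_const p)).const_mul c
  rw [hd.deriv]
  ring

lemma hasDerivAt_three_mul_rpow_neg_third {t : ℝ} (ht : 0 < t) :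
    HasDerivAt (fun s : ℝ => (3 * s) ^ (-(1/3) : ℝ)) (-((3 * t) ^ (-(1/3) : ℝ)) ^ 4) t := by
  have h3t : (0 : ℝ) < 3 * t := by positivity
  have hlin : HasDerivAt (fun s : ℝ => 3 * s) 3 t := by
    simpa using (hasDerivAt_id t).const_mul (3 : ℝ)
  have hpow := (Real.hasDerivAt_rpow_const (p := (-(1/3) : ℝ)) (Or.inl h3t.ne')).comp t hlin
  have hexp : (3 * t) ^ ((-(1/3) : ℝ) - 1) = ((3 * t) ^ (-(1/3) : ℝ)) ^ 4 := by
    rw [← Real.rpow_natCast, ← Real.rpow_mul h3t.le]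
    norm_num
  rw [hexp] at hpow
  exact hpow.congr_deriv (by ring)

/-- Self-similar Painlevé II solutions give solutions of the mKdV equation:
if `w'' = 2w³ + zw` and `u(x,t) = (3t)^{-1/3} w(x (3t)^{-1/3})` for `t > 0`, then
`u_t - 6 u² u_x + u_xxx = 0`. -/
theorem painleveII_selfSimilar_mKdV (w w₁ w₂ w₃ : ℝ → ℝ)
    (h1 : ∀ z, HasDerivAt w (w₁ z) z)
    (h2 : ∀ z, HasDerivAt w₁ (w₂ z) z)
    (h3 : ∀ z, HasDerivAt w₂ (w₃ z) z)
    (hPII : ∀ z, w₂ z = 2 * w z ^ 3 + z * w z)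
    (u : ℝ → ℝ → ℝ)
    (hu : ∀ x t, u x t = (3 * t) ^ (-(1/3) : ℝ) * w (x * (3 * t) ^ (-(1/3) : ℝ))) :
    ∀ x t, 0 < t →
      deriv (fun s => u x s) t - 6 * u x t ^ 2 * deriv (fun y => u y t) x
        + iteratedDeriv 3 (fun y => u y t) x = 0 := by
  intro x t ht
  set p : ℝ := (3 * t) ^ (-(1/3) : ℝ)
  have hdp := hasDerivAt_three_mul_rpow_neg_third ht
  have hut : HasDerivAt (fun s => u x s)
      (-p ^ 4 * w (x * p) + p * (w₁ (x * p) * (x * -p ^ 4))) t := by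
    simp_rw [hu x]
    exact hdp.mul ((h1 (x * p)).comp t (hdp.const_mul x))
  have hux : (fun y => u y t) = fun y => p * w (y * p) := funext fun y => hu y t
  rw [hut.deriv, hux, hu x t, iteratedDeriv_eq_iterate]
  simp only [Function.iterate_succ, Function.iterate_zero, Function.comp_apply, id,
    deriv_const_mul_comp_mul_const h1, deriv_const_mul_comp_mul_const h2,
    deriv_const_mul_comp_mul_const h3, painleveII_deriv h1 h3 hPII]
  ring
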